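/- Let A be a weak *-Hopf algebra with a normalized Haar integral h, let s ∈ A_R with s* = s, and set l := h·s² (which is a left integral) and e_l := s·h·s. Let M be an A-module algebra with crossed product M⋊A, and put E_l(m) := l▷m, which lies in M^A. Then: (i) for every left integral l' ∈ A and all a ∈ A, m ∈ M one has (1⋊a)·(m⋊1)·(1⋊l') = ((a▷m)⋊1)·(1⋊l') in M⋊A; (ii) 1⋊e_l commutes with n⋊1 for every n ∈ M^A, and (1⋊e_l)·(m⋊1)·(1⋊e_l) = (E_l(m)⋊1)·(1⋊e_l) = (1⋊e_l)·(E_l(m)⋊1) for all m ∈ M; (iii) in A one has e_l² = (Σ l₍₁₎·S(l₍₂₎))·e_l; in particular if Σ l₍₁₎·S(l₍₂₎) = 1 then e_l is idempotent. -/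

import Mathlib

open scoped TensorProduct

noncomputable section

/-- The componentwise star operation on a tensor product of star algebras,
as an additive map (it is conjugate-linear, hence not a `LinearMap`). -/
def tensorStar (A B : Type) [Ring A] [Algebra ℂ A] [StarRing A] [StarModule ℂ A]
    [Ring B] [Algebra ℂ B] [StarRing B] [StarModule ℂ B] :
    A ⊗[ℂ] B →+ A ⊗[ℂ] B :=
  TensorProduct.liftAddHom
    (AddMonoidHom.mk'
      (fun a => AddMonoidHom.mk' (fun b => star a ⊗ₜ[ℂ] star b)
        (fun x y => by
          show star a ⊗ₜ[ℂ] star (x + y) = star a ⊗ₜ[ℂ] star x + star a ⊗ₜ[ℂ] star y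
          rw [star_add, TensorProduct.tmul_add]))
      (fun x y => by
        ext b
        show star (x + y) ⊗ₜ[ℂ] star b = star x ⊗ₜ[ℂ] star b + star y ⊗ₜ[ℂ] star b
        rw [star_add, TensorProduct.add_tmul]))
    (fun r a b => by
      show star (r • a) ⊗ₜ[ℂ] star b = star a ⊗ₜ[ℂ] star (r • b)
      rw [star_smul, star_smul, TensorProduct.smul_tmul])

/-- A finite dimensional weak `*`-Hopf algebra over `ℂ` (axioms of [BNS]),
together with the derived properties of the antipode (which follow from the
axioms and are included as fields for convenience). -/
structure WeakHopfAlgebra (A : Type) [Ring A] [Algebra ℂ A] [StarRing A] [StarModule ℂ A] where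
  Δ : A →ₗ[ℂ] A ⊗[ℂ] A
  ε : A →ₗ[ℂ] ℂ
  S : A →ₗ[ℂ] A
  Sinv : A →ₗ[ℂ] A
  finite : FiniteDimensional ℂ A
  Δ_mul : ∀ x y : A, Δ (x * y) = Δ x * Δ y
  Δ_star : ∀ x : A, Δ (star x) = tensorStar A A (Δ x)
  coassoc : ∀ x : A,
    (TensorProduct.assoc ℂ A A A) ((TensorProduct.map Δ (LinearMap.id : A →ₗ[ℂ] A)) (Δ x))
      = (TensorProduct.map (LinearMap.id : A →ₗ[ℂ] A) Δ) (Δ x)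
  counit_left : ∀ x : A,
    (TensorProduct.lid ℂ A) ((TensorProduct.map ε (LinearMap.id : A →ₗ[ℂ] A)) (Δ x)) = x
  counit_right : ∀ x : A,
    (TensorProduct.rid ℂ A) ((TensorProduct.map (LinearMap.id : A →ₗ[ℂ] A) ε) (Δ x)) = x
  unit_weak :
    (Δ 1 ⊗ₜ[ℂ] (1 : A)) * ((TensorProduct.assoc ℂ A A A).symm ((1 : A) ⊗ₜ[ℂ] Δ 1))
      = (TensorProduct.map Δ (LinearMap.id : A →ₗ[ℂ] A)) (Δ 1)
  unit_weak' :
    ((TensorProduct.assoc ℂ A A A).symm ((1 : A) ⊗ₜ[ℂ] Δ 1)) * (Δ 1 ⊗ₜ[ℂ] (1 : A))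
      = (TensorProduct.map Δ (LinearMap.id : A →ₗ[ℂ] A)) (Δ 1)
  counit_weak : ∀ x y z : A,
    ε (x * y * z) = (TensorProduct.lid ℂ ℂ)
      ((TensorProduct.map (ε ∘ₗ LinearMap.mulLeft ℂ x) (ε ∘ₗ LinearMap.mulRight ℂ z)) (Δ y))
  counit_weak' : ∀ x y z : A,
    ε (x * y * z) = (TensorProduct.lid ℂ ℂ)
      ((TensorProduct.map (ε ∘ₗ LinearMap.mulRight ℂ z) (ε ∘ₗ LinearMap.mulLeft ℂ x)) (Δ y))
  antipode_left : ∀ x : A,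
    LinearMap.mul' ℂ A ((TensorProduct.map S (LinearMap.id : A →ₗ[ℂ] A)) (Δ x))
      = (TensorProduct.rid ℂ A)
          ((TensorProduct.map (LinearMap.id : A →ₗ[ℂ] A) (ε ∘ₗ LinearMap.mulLeft ℂ x)) (Δ 1))
  antipode_right : ∀ x : A,
    LinearMap.mul' ℂ A ((TensorProduct.map (LinearMap.id : A →ₗ[ℂ] A) S) (Δ x))
      = (TensorProduct.lid ℂ A)
          ((TensorProduct.map (ε ∘ₗ LinearMap.mulRight ℂ x) (LinearMap.id : A →ₗ[ℂ] A)) (Δ 1))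
  antipode_mid : ∀ x : A,
    LinearMap.mul' ℂ A
      ((TensorProduct.map (LinearMap.mul' ℂ A ∘ₗ TensorProduct.map S (LinearMap.id : A →ₗ[ℂ] A)) S)
        ((TensorProduct.map Δ (LinearMap.id : A →ₗ[ℂ] A)) (Δ x))) = S x
  S_Sinv : ∀ x : A, S (Sinv x) = x
  Sinv_S : ∀ x : A, Sinv (S x) = x
  S_antimul : ∀ x y : A, S (x * y) = S y * S x
  S_anticomul : ∀ x : A, Δ (S x) = (TensorProduct.comm ℂ A A) ((TensorProduct.map S S) (Δ x))
  S_star : ∀ x : A, star (S (star x)) = Sinv x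

/-- The set of elements commuting with everything. -/
def centerSet (R : Type) [Mul R] : Set R := {z | ∀ r : R, z * r = r * z}

namespace WeakHopfAlgebra

variable {A : Type} [Ring A] [Algebra ℂ A] [StarRing A] [StarModule ℂ A]

/-- `Σ x₍₁₎ · S(x₍₂₎)`. -/
def swIdS (W : WeakHopfAlgebra A) (x : A) : A :=
  LinearMap.mul' ℂ A ((TensorProduct.map (LinearMap.id : A →ₗ[ℂ] A) W.S) (W.Δ x))

/-- `Σ S(x₍₁₎) · x₍₂₎`. -/
def swSId (W : WeakHopfAlgebra A) (x : A) : A :=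
  LinearMap.mul' ℂ A ((TensorProduct.map W.S (LinearMap.id : A →ₗ[ℂ] A)) (W.Δ x))

/-- `Σ x₍₂₎ · S⁻¹(x₍₁₎)`. -/
def swIdSinv (W : WeakHopfAlgebra A) (x : A) : A :=
  LinearMap.mul' ℂ A
    ((TensorProduct.map (LinearMap.id : A →ₗ[ℂ] A) W.Sinv) ((TensorProduct.comm ℂ A A) (W.Δ x)))

/-- `Σ S⁻¹(x₍₂₎) · x₍₁₎`. -/
def swSinvId (W : WeakHopfAlgebra A) (x : A) : A :=
  LinearMap.mul' ℂ A
    ((TensorProduct.map W.Sinv (LinearMap.id : A →ₗ[ℂ] A)) ((TensorProduct.comm ℂ A A) (W.Δ x)))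

/-- The left subalgebra `A_L = {(φ ⊗ id)(Δ 1) : φ ∈ A*}`. -/
def AL (W : WeakHopfAlgebra A) : Set A :=
  {a | ∃ φ : A →ₗ[ℂ] ℂ,
    a = (TensorProduct.lid ℂ A) ((TensorProduct.map φ (LinearMap.id : A →ₗ[ℂ] A)) (W.Δ 1))}

/-- The right subalgebra `A_R = {(id ⊗ φ)(Δ 1) : φ ∈ A*}`. -/
def AR (W : WeakHopfAlgebra A) : Set A :=
  {a | ∃ φ : A →ₗ[ℂ] ℂ,
    a = (TensorProduct.rid ℂ A) ((TensorProduct.map (LinearMap.id : A →ₗ[ℂ] A) φ) (W.Δ 1))}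

/-- A left integral: `a · l = Σ a₍₁₎ S(a₍₂₎) · l` for all `a`. -/
def IsLeftIntegral (W : WeakHopfAlgebra A) (l : A) : Prop := ∀ a : A, a * l = W.swIdS a * l

/-- A right integral: `r · a = r · Σ S(a₍₁₎) a₍₂₎` for all `a`. -/
def IsRightIntegral (W : WeakHopfAlgebra A) (r : A) : Prop := ∀ a : A, r * a = r * W.swSId a

/-- A normalized Haar integral. -/
def IsHaar (W : WeakHopfAlgebra A) (h : A) : Prop :=
  W.IsLeftIntegral h ∧ W.IsRightIntegral h ∧ W.swSId h = 1 ∧ W.swIdS h = 1 ∧ W.S h = h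

/-- The canonical left action of a functional `λ ∈ A*` on `A`:
`λ ⇀ a = Σ a₍₁₎ · ⟨λ, a₍₂₎⟩`. -/
def lact (W : WeakHopfAlgebra A) (lam : A →ₗ[ℂ] ℂ) : A →ₗ[ℂ] A :=
  (TensorProduct.rid ℂ A).toLinearMap ∘ₗ
    (TensorProduct.map (LinearMap.id : A →ₗ[ℂ] A) lam) ∘ₗ W.Δ

/-- `λ ∈ A*` is a left integral of the dual weak Hopf algebra:
`λ ⇀ a ∈ A_L` for all `a ∈ A`. -/
def IsDualLeftIntegral (W : WeakHopfAlgebra A) (lam : A →ₗ[ℂ] ℂ) : Prop :=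
  ∀ a : A, W.lact lam a ∈ W.AL

/-- A dual pair of left integrals `(l, λ)`. -/
def IsDualPair (W : WeakHopfAlgebra A) (l : A) (lam : A →ₗ[ℂ] ℂ) : Prop :=
  W.IsLeftIntegral l ∧ W.IsDualLeftIntegral lam ∧
  W.lact lam l = 1 ∧
  (∀ a : A,
    (TensorProduct.rid ℂ A)
      ((TensorProduct.map (LinearMap.id : A →ₗ[ℂ] A) (lam ∘ₗ LinearMap.mulLeft ℂ a)) (W.Δ l))
      = W.S a) ∧
  (∀ a : A,
    (TensorProduct.lid ℂ A)
      ((TensorProduct.map (lam ∘ₗ LinearMap.mulRight ℂ a ∘ₗ W.Sinv)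
        (LinearMap.id : A →ₗ[ℂ] A)) (W.Δ l)) = a)

end WeakHopfAlgebra

/-- A (left) module `*`-algebra over a weak `*`-Hopf algebra. -/
structure ModuleAlgebra {A : Type} [Ring A] [Algebra ℂ A] [StarRing A] [StarModule ℂ A]
    (W : WeakHopfAlgebra A) (M : Type) [Ring M] [Algebra ℂ M] [StarRing M] [StarModule ℂ M] where
  act : A →ₗ[ℂ] M →ₗ[ℂ] M
  act_mul : ∀ (a b : A) (m : M), act (a * b) m = act a (act b m)
  act_one : ∀ m : M, act 1 m = m
  act_mul' : ∀ (a : A) (m n : M),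
    act a (m * n) = LinearMap.mul' ℂ M ((TensorProduct.map (act.flip m) (act.flip n)) (W.Δ a))
  act_star : ∀ (a : A) (m : M), star (act a m) = act (star (W.S a)) (star m)
  act_unit : ∀ a : A, act a 1 = act (W.swIdS a) 1

namespace ModuleAlgebra

variable {A : Type} [Ring A] [Algebra ℂ A] [StarRing A] [StarModule ℂ A]
variable {M : Type} [Ring M] [Algebra ℂ M] [StarRing M] [StarModule ℂ M]
variable {W : WeakHopfAlgebra A}

/-- `M_R = A ▷ 1_M`. -/
def MR (MA : ModuleAlgebra W M) : Set M := Set.range fun a : A => MA.act a 1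

/-- The fixed point algebra `M^A`. -/
def fixed (MA : ModuleAlgebra W M) : Set M :=
  {n | ∀ (a : A) (m : M), MA.act a (m * n) = MA.act a m * n}

end ModuleAlgebra

section Crossed

variable {A : Type} [Ring A] [Algebra ℂ A] [StarRing A] [StarModule ℂ A]
variable {M : Type} [Ring M] [Algebra ℂ M] [StarRing M] [StarModule ℂ M]
variable {W : WeakHopfAlgebra A}

/-- The subspace of `M ⊗ A` by which one divides to form the crossed product
`M ⋊ A = M ⊗_{A_L} A`. -/
def crossedRel (MA : ModuleAlgebra W M) : Submodule ℂ (M ⊗[ℂ] A) :=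
  Submodule.span ℂ
    {x | ∃ (m : M) (a b : A), b ∈ W.AL ∧
      x = (m * MA.act b 1) ⊗ₜ[ℂ] a - m ⊗ₜ[ℂ] (b * a)}

/-- The crossed product `M ⋊ A` as a vector space. -/
abbrev Crossed (MA : ModuleAlgebra W M) : Type := (M ⊗[ℂ] A) ⧸ crossedRel MA

/-- The canonical projection `M ⊗ A → M ⋊ A`; `cmk MA (m ⊗ₜ a)` is `m ⋊ a`. -/
def cmk (MA : ModuleAlgebra W M) : M ⊗[ℂ] A →ₗ[ℂ] Crossed MA := (crossedRel MA).mkQ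

/-- The embedding `M → M ⋊ A`, `m ↦ m ⋊ 1`. -/
def iM (MA : ModuleAlgebra W M) : M →ₗ[ℂ] Crossed MA :=
  cmk MA ∘ₗ (TensorProduct.mk ℂ M A).flip (1 : A)

/-- The map `A → M ⋊ A`, `a ↦ 1 ⋊ a`. -/
def iA (MA : ModuleAlgebra W M) : A →ₗ[ℂ] Crossed MA :=
  cmk MA ∘ₗ (TensorProduct.mk ℂ M A) (1 : M)

/-- The unit `1 ⋊ 1` of `M ⋊ A`. -/
def oneC (MA : ModuleAlgebra W M) : Crossed MA := cmk MA ((1 : M) ⊗ₜ[ℂ] (1 : A))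

/-- The multiplication of the crossed product `M ⋊ A`
(whose existence is the content of Theorem 3.1), as a bundled bilinear map
together with its defining formula on generators:
`(m ⋊ a)(m' ⋊ a') = Σ m (a₍₁₎ ▷ m') ⋊ a₍₂₎ a'`. -/
structure CrossedMul (MA : ModuleAlgebra W M) where
  mul : Crossed MA →ₗ[ℂ] Crossed MA →ₗ[ℂ] Crossed MA
  mul_def : ∀ (m m' : M) (a a' : A),
    mul (cmk MA (m ⊗ₜ[ℂ] a)) (cmk MA (m' ⊗ₜ[ℂ] a'))
      = cmk MA ((TensorProduct.map ((LinearMap.mulLeft ℂ m) ∘ₗ (MA.act.flip m'))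
          (LinearMap.mulRight ℂ a')) (W.Δ a))

/-- The star operation of the crossed product `M ⋊ A`
(whose existence is part of Theorem 3.1):
`(m ⋊ a)* = Σ (a₍₁₎* ▷ m*) ⋊ a₍₂₎*`. -/
structure CrossedStar (MA : ModuleAlgebra W M) where
  st : Crossed MA →+ Crossed MA
  st_smul : ∀ (c : ℂ) (x : Crossed MA), st (c • x) = (starRingEnd ℂ c) • st x
  st_def : ∀ (m : M) (a : A),
    st (cmk MA (m ⊗ₜ[ℂ] a))
      = cmk MA ((TensorProduct.map (MA.act.flip (star m)) (LinearMap.id : A →ₗ[ℂ] A))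
          (W.Δ (star a)))

/-- The multiplication on `(M ⋊ A) ⊗ B` induced by a crossed product
multiplication on `M ⋊ A` and the algebra structure of `B`. -/
def mulT (MA : ModuleAlgebra W M) (CS : CrossedMul MA) (B : Type) [Ring B] [Algebra ℂ B] :
    Crossed MA ⊗[ℂ] B →ₗ[ℂ] Crossed MA ⊗[ℂ] B →ₗ[ℂ] Crossed MA ⊗[ℂ] B :=
  TensorProduct.lift
    ((TensorProduct.mapBilinear (RingHom.id ℂ) (Crossed MA) B (Crossed MA) B).compl₁₂ CS.mul
      (LinearMap.mul ℂ B))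

end Crossed

/-!
Everything rests on the target counital map `ε_t(x) = Σ x₍₁₎ S(x₍₂₎)`, which takes values in
`A_L`, and on three identities: `Σ ε_t(x₍₁₎) x₍₂₎ = x`, `Σ x₍₁₎ ⊗ ε_t(x₍₂₎) = Σ 1₍₁₎x ⊗ 1₍₂₎`,
and `Δ r = Δ1 (1 ⊗ r) = (1 ⊗ r) Δ1` for `r ∈ A_R` (so `A_L` and `A_R` commute).

A left integral absorbs, `x l = ε_t(x) l`, and in `M ⋊ A` an element `b ∈ A_L` crosses the `⋊`
as `m (b ▷ 1) ⋊ a = m ⋊ b a`, with `ε_t(x) ▷ 1 = x ▷ 1`. Hence `(p ⋊ x)(1 ⋊ l) = p (x ▷ 1) ⋊ l`,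
which gives (i). A fixed element `n` commutes with `A ▷ 1` (pass to `n*`, fixed because `h*` is
again a left integral), so `(1 ⋊ x)(n ⋊ 1) = n ⋊ x` for every `x`. For (ii) and (iii),
`Δ(s y s) = Σ y₍₁₎ ⊗ s y₍₂₎ s` and `(s y s)(s h s) = ε_t(y s²)(s h s)` reduce everything to the
same absorption.
-/

open TensorProduct

section SliceMaps

variable {A B : Type} [Ring A] [Algebra ℂ A] [Ring B] [Algebra ℂ B]

theorem lid_map_mul_one_tmul (φ : A →ₗ[ℂ] ℂ) (t : A ⊗[ℂ] B) (b : B) :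
    TensorProduct.lid ℂ B (map φ LinearMap.id (t * ((1 : A) ⊗ₜ[ℂ] b)))
      = TensorProduct.lid ℂ B (map φ LinearMap.id t) * b := by
  induction t using TensorProduct.induction_on with
  | zero => simp
  | tmul u v => simp
  | add t t' ht ht' => simp [add_mul, ht, ht']

theorem lid_map_one_tmul_mul (φ : A →ₗ[ℂ] ℂ) (t : A ⊗[ℂ] B) (b : B) :
    TensorProduct.lid ℂ B (map φ LinearMap.id (((1 : A) ⊗ₜ[ℂ] b) * t))
      = b * TensorProduct.lid ℂ B (map φ LinearMap.id t) := by
  induction t using TensorProduct.induction_on with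
  | zero => simp
  | tmul u v => simp
  | add t t' ht ht' => simp [mul_add, ht, ht']

variable {C : Type} [Ring C] [Algebra ℂ C]

theorem rid_map_tmul_one_mul_assoc_symm (φ : C →ₗ[ℂ] ℂ) (t : A ⊗[ℂ] B) (u : B ⊗[ℂ] C) :
    TensorProduct.rid ℂ (A ⊗[ℂ] B) (map LinearMap.id φ
        ((t ⊗ₜ[ℂ] (1 : C)) * (TensorProduct.assoc ℂ A B C).symm ((1 : A) ⊗ₜ[ℂ] u)))
      = t * ((1 : A) ⊗ₜ[ℂ] TensorProduct.rid ℂ B (map LinearMap.id φ u)) := by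
  induction u using TensorProduct.induction_on with
  | zero => simp
  | add u u' hu hu' => simp only [tmul_add, map_add, mul_add, hu, hu']
  | tmul b c => simp

theorem rid_map_assoc_symm_mul_tmul_one (φ : C →ₗ[ℂ] ℂ) (t : A ⊗[ℂ] B) (u : B ⊗[ℂ] C) :
    TensorProduct.rid ℂ (A ⊗[ℂ] B) (map LinearMap.id φ
        ((TensorProduct.assoc ℂ A B C).symm ((1 : A) ⊗ₜ[ℂ] u) * (t ⊗ₜ[ℂ] (1 : C))))
      = ((1 : A) ⊗ₜ[ℂ] TensorProduct.rid ℂ B (map LinearMap.id φ u)) * t := by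
  induction u using TensorProduct.induction_on with
  | zero => simp
  | add u u' hu hu' => simp only [tmul_add, map_add, add_mul, hu, hu']
  | tmul b c => simp

end SliceMaps

namespace WeakHopfAlgebra

variable {A : Type} [Ring A] [Algebra ℂ A] [StarRing A] [StarModule ℂ A]
variable (W : WeakHopfAlgebra A)

/-- The target counital map `ε_t` of [BNS]. -/
def epsT : A →ₗ[ℂ] A := LinearMap.mul' ℂ A ∘ₗ map LinearMap.id W.S ∘ₗ W.Δ

theorem epsT_apply (x : A) : W.epsT x = W.swIdS x := rfl

theorem epsT_mem_AL (x : A) : W.epsT x ∈ W.AL := ⟨_, W.antipode_right x⟩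

variable {W}

theorem epsT_eq_sum {P : Finset (A × A)} (hP : W.Δ 1 = ∑ p ∈ P, p.1 ⊗ₜ[ℂ] p.2) (x : A) :
    W.epsT x = ∑ p ∈ P, W.ε (p.1 * x) • p.2 := by
  rw [epsT_apply, swIdS, W.antipode_right, hP]
  simp

theorem Δ_eq_sum_mul {P Q : Finset (A × A)} (hP : W.Δ 1 = ∑ p ∈ P, p.1 ⊗ₜ[ℂ] p.2) {x : A}
    (hQ : W.Δ x = ∑ q ∈ Q, q.1 ⊗ₜ[ℂ] q.2) :
    W.Δ x = ∑ p ∈ P, ∑ q ∈ Q, (p.1 * q.1) ⊗ₜ[ℂ] (p.2 * q.2) := by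
  conv_lhs => rw [← one_mul x, W.Δ_mul, hP, hQ]
  simp only [Finset.sum_mul_sum, Algebra.TensorProduct.tmul_mul_tmul]

theorem sum_epsT_mul {x : A} {Q : Finset (A × A)} (hQ : W.Δ x = ∑ q ∈ Q, q.1 ⊗ₜ[ℂ] q.2) :
    ∑ q ∈ Q, W.epsT q.1 * q.2 = x := by
  obtain ⟨P, hP⟩ := exists_finset (W.Δ 1)
  conv_rhs => rw [← W.counit_left x, Δ_eq_sum_mul hP hQ]
  simp only [epsT_eq_sum hP, map_sum, map_tmul, LinearMap.id_coe, id_eq, lid_tmul,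
    Finset.sum_mul, smul_mul_assoc]
  exact Finset.sum_comm

theorem map_Δ_id_Δ_one_eq_sum {P : Finset (A × A)} (hP : W.Δ 1 = ∑ p ∈ P, p.1 ⊗ₜ[ℂ] p.2) :
    map W.Δ LinearMap.id (W.Δ 1) = ∑ r ∈ P, ∑ p ∈ P, (p.1 ⊗ₜ[ℂ] (r.1 * p.2)) ⊗ₜ[ℂ] r.2 := by
  rw [← W.unit_weak', hP, tmul_sum, map_sum, sum_tmul, Finset.sum_mul_sum]
  simp only [assoc_symm_tmul, Algebra.TensorProduct.tmul_mul_tmul, one_mul, mul_one]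

theorem map_id_epsT_Δ (x : A) :
    map LinearMap.id W.epsT (W.Δ x) = map (LinearMap.mulRight ℂ x) LinearMap.id (W.Δ 1) := by
  obtain ⟨P, hP⟩ := exists_finset (W.Δ 1)
  obtain ⟨Q, hQ⟩ := exists_finset (W.Δ x)
  -- the right side is `(F ⊗ id)((Δ ⊗ id)(Δ1))`, which the weak unit axiom expands
  let F : A ⊗[ℂ] A →ₗ[ℂ] A :=
    (TensorProduct.rid ℂ A).toLinearMap ∘ₗ map LinearMap.id W.ε ∘ₗ LinearMap.mulRight ℂ (W.Δ x)
  have hFΔ : F ∘ₗ W.Δ = LinearMap.mulRight ℂ x := LinearMap.ext fun u => by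
    simp only [F, LinearMap.comp_apply, LinearMap.mulRight_apply, ← W.Δ_mul]
    exact W.counit_right (u * x)
  have hF (u v : A) : F (u ⊗ₜ[ℂ] v) = ∑ q ∈ Q, W.ε (v * q.2) • (u * q.1) := by
    simp [F, hQ, Finset.mul_sum, Algebra.TensorProduct.tmul_mul_tmul]
  rw [← hFΔ, ← LinearMap.id_comp LinearMap.id, map_comp, LinearMap.id_comp, LinearMap.comp_apply,
    map_Δ_id_Δ_one_eq_sum hP, Δ_eq_sum_mul hP hQ]
  simp only [map_sum, map_tmul, LinearMap.id_coe, id_eq, hF, epsT_eq_sum hP, tmul_sum, sum_tmul,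
    tmul_smul, ← smul_tmul', mul_assoc]
  exact (Finset.sum_congr rfl fun _ _ => Finset.sum_comm).trans Finset.sum_comm

theorem map_id_epsT_Δ_one : map LinearMap.id W.epsT (W.Δ 1) = W.Δ 1 := by
  rw [map_id_epsT_Δ, LinearMap.mulRight_one, map_id, LinearMap.id_apply]

theorem epsT_epsT (x : A) : W.epsT (W.epsT x) = W.epsT x := by
  obtain ⟨P, hP⟩ := exists_finset (W.Δ 1)
  have h := congrArg (TensorProduct.lid ℂ A ∘ map (W.ε ∘ₗ LinearMap.mulRight ℂ x) LinearMap.id)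
    (map_id_epsT_Δ_one (W := W))
  simp only [hP, Function.comp_apply, map_sum, map_tmul, lid_tmul] at h
  simpa [epsT_eq_sum hP x] using h

theorem Δ_rid_map_id (φ : A →ₗ[ℂ] ℂ) (t : A ⊗[ℂ] A) :
    W.Δ (TensorProduct.rid ℂ A (map LinearMap.id φ t))
      = TensorProduct.rid ℂ (A ⊗[ℂ] A) (map LinearMap.id φ (map W.Δ LinearMap.id t)) := by
  induction t using TensorProduct.induction_on with
  | zero => simp
  | tmul u v => simp
  | add t t' ht ht' => simp only [map_add, ht, ht']

theorem Δ_eq_Δ_one_mul_of_mem_AR {r : A} (hr : r ∈ W.AR) :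
    W.Δ r = W.Δ 1 * ((1 : A) ⊗ₜ[ℂ] r) := by
  obtain ⟨φ, rfl⟩ := hr
  rw [Δ_rid_map_id, ← W.unit_weak, rid_map_tmul_one_mul_assoc_symm]

theorem Δ_eq_mul_Δ_one_of_mem_AR {r : A} (hr : r ∈ W.AR) :
    W.Δ r = ((1 : A) ⊗ₜ[ℂ] r) * W.Δ 1 := by
  obtain ⟨φ, rfl⟩ := hr
  rw [Δ_rid_map_id, ← W.unit_weak', rid_map_assoc_symm_mul_tmul_one]

theorem commute_of_mem_AL_of_mem_AR {b r : A} (hb : b ∈ W.AL) (hr : r ∈ W.AR) :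
    Commute b r := by
  obtain ⟨φ, rfl⟩ := hb
  rw [Commute, SemiconjBy, ← lid_map_mul_one_tmul, ← lid_map_one_tmul_mul,
    ← Δ_eq_Δ_one_mul_of_mem_AR hr, Δ_eq_mul_Δ_one_of_mem_AR hr]

theorem Δ_mul_of_right_mem_AR {r : A} (hr : r ∈ W.AR) {x : A} {ι : Type*} {I : Finset ι}
    {f g : ι → A} (hx : W.Δ x = ∑ i ∈ I, f i ⊗ₜ[ℂ] g i) :
    W.Δ (x * r) = ∑ i ∈ I, f i ⊗ₜ[ℂ] (g i * r) := by
  rw [W.Δ_mul, Δ_eq_Δ_one_mul_of_mem_AR hr, ← mul_assoc, ← W.Δ_mul, mul_one, hx, Finset.sum_mul]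
  simp only [Algebra.TensorProduct.tmul_mul_tmul, mul_one]

theorem Δ_mul_of_left_mem_AR {r : A} (hr : r ∈ W.AR) {x : A} {ι : Type*} {I : Finset ι}
    {f g : ι → A} (hx : W.Δ x = ∑ i ∈ I, f i ⊗ₜ[ℂ] g i) :
    W.Δ (r * x) = ∑ i ∈ I, f i ⊗ₜ[ℂ] (r * g i) := by
  rw [W.Δ_mul, Δ_eq_mul_Δ_one_of_mem_AR hr, mul_assoc, ← W.Δ_mul, one_mul, hx, Finset.mul_sum]
  simp only [Algebra.TensorProduct.tmul_mul_tmul, one_mul]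

theorem Δ_mul_mul_self_of_mem_AR {s : A} (hs : s ∈ W.AR) {x : A} {ι : Type*} {I : Finset ι}
    {f g : ι → A} (hx : W.Δ x = ∑ i ∈ I, f i ⊗ₜ[ℂ] g i) :
    W.Δ (x * (s * s)) = ∑ i ∈ I, f i ⊗ₜ[ℂ] (g i * (s * s)) := by
  simpa only [mul_assoc] using Δ_mul_of_right_mem_AR hs (Δ_mul_of_right_mem_AR hs hx)

theorem Δ_sandwich_of_mem_AR {s : A} (hs : s ∈ W.AR) {x : A} {ι : Type*} {I : Finset ι}
    {f g : ι → A} (hx : W.Δ x = ∑ i ∈ I, f i ⊗ₜ[ℂ] g i) :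
    W.Δ (s * x * s) = ∑ i ∈ I, f i ⊗ₜ[ℂ] (s * g i * s) :=
  Δ_mul_of_right_mem_AR hs (Δ_mul_of_left_mem_AR hs hx)

theorem Sinv_mul (x y : A) : W.Sinv (x * y) = W.Sinv y * W.Sinv x := by
  apply Function.LeftInverse.injective W.Sinv_S
  rw [W.S_Sinv, W.S_antimul, W.S_Sinv, W.S_Sinv]

theorem star_swSId_star (x : A) : star (W.swSId (star x)) = W.Sinv (W.epsT x) := by
  obtain ⟨Q, hQ⟩ := exists_finset (W.Δ x)
  have hQ' : W.Δ (star x) = ∑ q ∈ Q, star q.1 ⊗ₜ[ℂ] star q.2 := by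
    simp [W.Δ_star, hQ, tensorStar]
  simp [swSId, epsT, hQ, hQ', star_sum, Sinv_mul, W.S_star, W.Sinv_S]

theorem IsHaar.star_isLeftIntegral {h : A} (hh : W.IsHaar h) : W.IsLeftIntegral (star h) := by
  have habsorb (x : A) : x * star h = W.Sinv (W.epsT x) * star h := by
    simpa [star_swSId_star] using congrArg star (hh.2.1 (star x))
  intro a
  rw [habsorb a, ← epsT_apply, habsorb (W.epsT a), epsT_epsT]

theorem IsLeftIntegral.mul_right {l : A} (hl : W.IsLeftIntegral l) (x : A) :
    W.IsLeftIntegral (l * x) := fun a => by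
  rw [← mul_assoc, hl a, mul_assoc]

theorem IsLeftIntegral.sandwich_mul_sandwich {l s : A} (hl : W.IsLeftIntegral l) (hs : s ∈ W.AR)
    (y : A) : s * y * s * (s * l * s) = W.epsT (y * (s * s)) * (s * l * s) := by
  have hcomm := commute_of_mem_AL_of_mem_AR (W.epsT_mem_AL (y * (s * s))) hs
  calc s * y * s * (s * l * s) = s * (y * (s * s) * l) * s := by simp only [mul_assoc]
    _ = s * (W.epsT (y * (s * s)) * l) * s := by rw [hl, epsT_apply]
    _ = W.epsT (y * (s * s)) * (s * l * s) := by
      rw [← mul_assoc s, ← hcomm.eq]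
      simp only [mul_assoc]

end WeakHopfAlgebra

namespace ModuleAlgebra

open WeakHopfAlgebra

variable {A : Type} [Ring A] [Algebra ℂ A] [StarRing A] [StarModule ℂ A]
variable {M : Type} [Ring M] [Algebra ℂ M] [StarRing M] [StarModule ℂ M]
variable {W : WeakHopfAlgebra A} (MA : ModuleAlgebra W M)

theorem act_mul_eq_sum {a : A} {ι : Type*} {I : Finset ι} {f g : ι → A}
    (ha : W.Δ a = ∑ i ∈ I, f i ⊗ₜ[ℂ] g i) (m n : M) :
    MA.act a (m * n) = ∑ i ∈ I, MA.act (f i) m * MA.act (g i) n := by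
  simp [MA.act_mul', ha]

theorem act_mem_fixed_of_isLeftIntegral {l : A} (hl : W.IsLeftIntegral l) (m : M) :
    MA.act l m ∈ MA.fixed := by
  intro a m'
  have habsorb : MA.act.flip (MA.act l m) ∘ₗ W.epsT = MA.act.flip (MA.act l m) :=
    LinearMap.ext fun z => by simp [← MA.act_mul, epsT_apply, ← hl z]
  calc MA.act a (m' * MA.act l m)
      = LinearMap.mul' ℂ M (map (MA.act.flip m') (MA.act.flip (MA.act l m))
          (map LinearMap.id W.epsT (W.Δ a))) := by
        rw [MA.act_mul', ← LinearMap.comp_apply (map _ _) (map LinearMap.id W.epsT), ← map_comp,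
          LinearMap.comp_id, habsorb]
    _ = LinearMap.mul' ℂ M
          (map (MA.act.flip (MA.act a m')) (MA.act.flip (MA.act l m)) (W.Δ 1)) := by
        rw [map_id_epsT_Δ, ← LinearMap.comp_apply (map _ _) (map _ LinearMap.id), ← map_comp,
          LinearMap.comp_id]
        congr 3
        ext z
        simp [MA.act_mul]
    _ = MA.act a m' * MA.act l m := by rw [← MA.act_mul', MA.act_one]

theorem act_eq_act_one_mul_of_mem_fixed {n : M} (hn : n ∈ MA.fixed) (a : A) :
    MA.act a n = MA.act a 1 * n := by
  simpa using hn a 1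

theorem star_mem_fixed {h : A} (hh : W.IsHaar h) {n : M} (hn : n ∈ MA.fixed) :
    star n ∈ MA.fixed := by
  have hhn : MA.act h n = n := by
    rw [MA.act_eq_act_one_mul_of_mem_fixed hn, MA.act_unit, hh.2.2.2.1, MA.act_one, one_mul]
  rw [← hhn, MA.act_star, hh.2.2.2.2]
  exact MA.act_mem_fixed_of_isLeftIntegral hh.star_isLeftIntegral _

theorem commute_act_one_of_mem_fixed {h : A} (hh : W.IsHaar h) {n : M} (hn : n ∈ MA.fixed)
    (a : A) : Commute n (MA.act a 1) := by
  -- both sides are adjoints of `S(a)* ▷ n*`: expand it once using that `n*` is fixed, once `n`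
  apply star_injective
  rw [star_mul, MA.act_star, star_one,
    ← MA.act_eq_act_one_mul_of_mem_fixed (MA.star_mem_fixed hh hn), ← MA.act_star,
    MA.act_eq_act_one_mul_of_mem_fixed hn]

end ModuleAlgebra

section CrossedProduct

open WeakHopfAlgebra

variable {A : Type} [Ring A] [Algebra ℂ A] [StarRing A] [StarModule ℂ A]
variable {M : Type} [Ring M] [Algebra ℂ M] [StarRing M] [StarModule ℂ M]
variable {W : WeakHopfAlgebra A} (MA : ModuleAlgebra W M) (CS : CrossedMul MA)

theorem iM_apply (m : M) : iM MA m = cmk MA (m ⊗ₜ[ℂ] (1 : A)) := rfl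

theorem iA_apply (a : A) : iA MA a = cmk MA ((1 : M) ⊗ₜ[ℂ] a) := rfl

theorem cmk_mul_act_one_tmul (m : M) (y a : A) :
    cmk MA ((m * MA.act y 1) ⊗ₜ[ℂ] a) = cmk MA (m ⊗ₜ[ℂ] (W.epsT y * a)) := by
  rw [MA.act_unit, ← epsT_apply, cmk, Submodule.mkQ_apply, Submodule.mkQ_apply,
    Submodule.Quotient.eq]
  exact Submodule.subset_span ⟨m, a, _, W.epsT_mem_AL y, rfl⟩

theorem cmk_tmul_mul_of_isLeftIntegral {l : A} (hl : W.IsLeftIntegral l) (m : M) (y : A) :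
    cmk MA (m ⊗ₜ[ℂ] (y * l)) = cmk MA ((m * MA.act y 1) ⊗ₜ[ℂ] l) := by
  rw [hl, ← epsT_apply, cmk_mul_act_one_tmul]

theorem sum_cmk_mul_act_one_tmul {x : A} {Q : Finset (A × A)}
    (hQ : W.Δ x = ∑ q ∈ Q, q.1 ⊗ₜ[ℂ] q.2) (m : M) (a : A) :
    ∑ q ∈ Q, cmk MA ((m * MA.act q.1 1) ⊗ₜ[ℂ] (q.2 * a)) = cmk MA (m ⊗ₜ[ℂ] (x * a)) := by
  simp only [cmk_mul_act_one_tmul, ← mul_assoc, ← map_sum, ← tmul_sum, ← Finset.sum_mul,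
    sum_epsT_mul hQ]

theorem cmk_mul_cmk_eq_sum {a : A} {ι : Type*} {I : Finset ι} {f g : ι → A}
    (ha : W.Δ a = ∑ i ∈ I, f i ⊗ₜ[ℂ] g i) (m m' : M) (a' : A) :
    CS.mul (cmk MA (m ⊗ₜ[ℂ] a)) (cmk MA (m' ⊗ₜ[ℂ] a'))
      = ∑ i ∈ I, cmk MA ((m * MA.act (f i) m') ⊗ₜ[ℂ] (g i * a')) := by
  simp [CS.mul_def, ha]

theorem iA_mul_iM_eq_sum {a : A} {ι : Type*} {I : Finset ι} {f g : ι → A}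
    (ha : W.Δ a = ∑ i ∈ I, f i ⊗ₜ[ℂ] g i) (m : M) :
    CS.mul (iA MA a) (iM MA m) = ∑ i ∈ I, cmk MA (MA.act (f i) m ⊗ₜ[ℂ] g i) := by
  simp only [iA_apply, iM_apply, cmk_mul_cmk_eq_sum MA CS ha, one_mul, mul_one]

theorem iM_mul_iA (m : M) (a : A) : CS.mul (iM MA m) (iA MA a) = cmk MA (m ⊗ₜ[ℂ] a) := by
  obtain ⟨P, hP⟩ := exists_finset (W.Δ 1)
  rw [iM_apply, iA_apply, cmk_mul_cmk_eq_sum MA CS hP, sum_cmk_mul_act_one_tmul MA hP, one_mul]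

theorem iA_mul_iM_of_mem_fixed {h : A} (hh : W.IsHaar h) {n : M} (hn : n ∈ MA.fixed) (x : A) :
    CS.mul (iA MA x) (iM MA n) = cmk MA (n ⊗ₜ[ℂ] x) := by
  obtain ⟨Q, hQ⟩ := exists_finset (W.Δ x)
  rw [iA_mul_iM_eq_sum MA CS hQ, ← mul_one x, ← sum_cmk_mul_act_one_tmul MA hQ]
  simp only [mul_one, MA.act_eq_act_one_mul_of_mem_fixed hn,
    (MA.commute_act_one_of_mem_fixed hh hn _).eq]

theorem cmk_mul_iA_of_isLeftIntegral {l : A} (hl : W.IsLeftIntegral l) (m : M) (x : A) :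
    CS.mul (cmk MA (m ⊗ₜ[ℂ] x)) (iA MA l) = cmk MA ((m * MA.act x 1) ⊗ₜ[ℂ] l) := by
  obtain ⟨Q, hQ⟩ := exists_finset (W.Δ x)
  have hx : MA.act x 1 = ∑ q ∈ Q, MA.act q.1 1 * MA.act q.2 1 := by
    simpa using MA.act_mul_eq_sum hQ 1 1
  rw [iA_apply, cmk_mul_cmk_eq_sum MA CS hQ, hx, Finset.mul_sum, sum_tmul, map_sum]
  simp only [cmk_tmul_mul_of_isLeftIntegral MA hl, mul_assoc]

theorem iA_mul_iM_mul_iA_of_isLeftIntegral {l : A} (hl : W.IsLeftIntegral l) (a : A) (m : M) :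
    CS.mul (CS.mul (iA MA a) (iM MA m)) (iA MA l) = CS.mul (iM MA (MA.act a m)) (iA MA l) := by
  obtain ⟨Q, hQ⟩ := exists_finset (W.Δ a)
  have ham : MA.act a m = ∑ q ∈ Q, MA.act q.1 m * MA.act q.2 1 := by
    simpa using MA.act_mul_eq_sum hQ m 1
  rw [iA_mul_iM_eq_sum MA CS hQ, map_sum, LinearMap.sum_apply, iM_apply,
    cmk_mul_iA_of_isLeftIntegral MA CS hl, MA.act_one, mul_one, ham, sum_tmul, map_sum]
  simp only [cmk_mul_iA_of_isLeftIntegral MA CS hl]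

theorem cmk_sandwich_mul_iA_sandwich {l s : A} (hl : W.IsLeftIntegral l) (hs : s ∈ W.AR)
    (m : M) (w : A) :
    CS.mul (cmk MA (m ⊗ₜ[ℂ] (s * w * s))) (iA MA (s * l * s))
      = cmk MA ((m * MA.act (w * (s * s)) 1) ⊗ₜ[ℂ] (s * l * s)) := by
  obtain ⟨Q, hQ⟩ := exists_finset (W.Δ w)
  have hwss : MA.act (w * (s * s)) 1 = ∑ q ∈ Q, MA.act q.1 1 * MA.act (q.2 * (s * s)) 1 := by
    simpa using MA.act_mul_eq_sum (Δ_mul_mul_self_of_mem_AR hs hQ) 1 1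
  rw [iA_apply, cmk_mul_cmk_eq_sum MA CS (Δ_sandwich_of_mem_AR hs hQ), hwss, Finset.mul_sum,
    sum_tmul, map_sum]
  refine Finset.sum_congr rfl fun q _ => ?_
  rw [hl.sandwich_mul_sandwich hs, ← cmk_mul_act_one_tmul, mul_assoc m]

theorem iA_sandwich_mul_iM_mul_iA_sandwich {l s : A} (hl : W.IsLeftIntegral l) (hs : s ∈ W.AR)
    (m : M) :
    CS.mul (CS.mul (iA MA (s * l * s)) (iM MA m)) (iA MA (s * l * s))
      = CS.mul (iM MA (MA.act (l * (s * s)) m)) (iA MA (s * l * s)) := by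
  obtain ⟨Q, hQ⟩ := exists_finset (W.Δ l)
  have hlss : MA.act (l * (s * s)) m = ∑ q ∈ Q, MA.act q.1 m * MA.act (q.2 * (s * s)) 1 := by
    simpa using MA.act_mul_eq_sum (Δ_mul_mul_self_of_mem_AR hs hQ) m 1
  rw [iA_mul_iM_eq_sum MA CS (Δ_sandwich_of_mem_AR hs hQ), map_sum, LinearMap.sum_apply,
    iM_mul_iA, hlss, sum_tmul, map_sum]
  simp only [cmk_sandwich_mul_iA_sandwich MA CS hl hs]

end CrossedProduct

theorem jones_projection_relations_general
    {A M : Type} [Ring A] [Algebra ℂ A] [StarRing A] [StarModule ℂ A]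
    [Ring M] [Algebra ℂ M] [StarRing M] [StarModule ℂ M]
    (W : WeakHopfAlgebra A) (MA : ModuleAlgebra W M) (CS : CrossedMul MA)
    (h : A) (hh : W.IsHaar h) (s : A) (hs : s ∈ W.AR) :
    W.IsLeftIntegral (h * (s * s))
    ∧ (∀ m : M, MA.act (h * (s * s)) m ∈ MA.fixed)
    ∧ (∀ l' : A, W.IsLeftIntegral l' → ∀ (a : A) (m : M),
        CS.mul (CS.mul (iA MA a) (iM MA m)) (iA MA l')
          = CS.mul (iM MA (MA.act a m)) (iA MA l'))
    ∧ (∀ n ∈ MA.fixed,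
        CS.mul (iA MA (s * h * s)) (iM MA n) = CS.mul (iM MA n) (iA MA (s * h * s)))
    ∧ (∀ m : M,
        CS.mul (CS.mul (iA MA (s * h * s)) (iM MA m)) (iA MA (s * h * s))
            = CS.mul (iM MA (MA.act (h * (s * s)) m)) (iA MA (s * h * s))
        ∧ CS.mul (iM MA (MA.act (h * (s * s)) m)) (iA MA (s * h * s))
            = CS.mul (iA MA (s * h * s)) (iM MA (MA.act (h * (s * s)) m)))
    ∧ (s * h * s) * (s * h * s) = W.swIdS (h * (s * s)) * (s * h * s)
    ∧ (W.swIdS (h * (s * s)) = 1 → (s * h * s) * (s * h * s) = s * h * s) := by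
  have hl : W.IsLeftIntegral (h * (s * s)) := hh.1.mul_right (s * s)
  have hfix (m : M) : MA.act (h * (s * s)) m ∈ MA.fixed := MA.act_mem_fixed_of_isLeftIntegral hl m
  have hcomm (n : M) (hn : n ∈ MA.fixed) :
      CS.mul (iA MA (s * h * s)) (iM MA n) = CS.mul (iM MA n) (iA MA (s * h * s)) := by
    rw [iA_mul_iM_of_mem_fixed MA CS hh hn, iM_mul_iA]
  have hsq : (s * h * s) * (s * h * s) = W.swIdS (h * (s * s)) * (s * h * s) :=
    hh.1.sandwich_mul_sandwich hs h
  exact ⟨hl, hfix, fun l' hl' => iA_mul_iM_mul_iA_of_isLeftIntegral MA CS hl', hcomm,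
    fun m => ⟨iA_sandwich_mul_iM_mul_iA_sandwich MA CS hh.1 hs m, (hcomm _ (hfix m)).symm⟩,
    hsq, fun hnorm => by rw [hsq, hnorm, one_mul]⟩

/-- Proposition 3.15' of [NSW] (Jones projections from positive left
integrals): for the Haar integral `h` and a self-adjoint `s ∈ A_R`, with
`l = h·s²` and `e_l = s·h·s`:
(i) `l` is a left integral and `E_l(m) = l ▷ m ∈ M^A`;
(ii) `(1 ⋊ a)(m ⋊ 1)(1 ⋊ l') = ((a ▷ m) ⋊ 1)(1 ⋊ l')` for any left integral
`l'`;
(iii) `1 ⋊ e_l` commutes with `M^A ⋊ 1` and satisfies the Jones relation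
`e_l·m·e_l = E_l(m)·e_l = e_l·E_l(m)` in `M ⋊ A`;
(iv) `e_l² = (Σ l₍₁₎ S(l₍₂₎))·e_l` in `A`; in particular `e_l` is idempotent
if `l` is normalized. -/
theorem jones_projection_relations
    {A M : Type} [Ring A] [Algebra ℂ A] [StarRing A] [StarModule ℂ A]
    [Ring M] [Algebra ℂ M] [StarRing M] [StarModule ℂ M]
    (W : WeakHopfAlgebra A) (MA : ModuleAlgebra W M) (CS : CrossedMul MA)
    (h : A) (hh : W.IsHaar h) (s : A) (hs : s ∈ W.AR) (hss : star s = s) :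
    W.IsLeftIntegral (h * (s * s))
    ∧ (∀ m : M, MA.act (h * (s * s)) m ∈ MA.fixed)
    ∧ (∀ l' : A, W.IsLeftIntegral l' → ∀ (a : A) (m : M),
        CS.mul (CS.mul (iA MA a) (iM MA m)) (iA MA l')
          = CS.mul (iM MA (MA.act a m)) (iA MA l'))
    ∧ (∀ n ∈ MA.fixed,
        CS.mul (iA MA (s * h * s)) (iM MA n) = CS.mul (iM MA n) (iA MA (s * h * s)))
    ∧ (∀ m : M,
        CS.mul (CS.mul (iA MA (s * h * s)) (iM MA m)) (iA MA (s * h * s))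
            = CS.mul (iM MA (MA.act (h * (s * s)) m)) (iA MA (s * h * s))
        ∧ CS.mul (iM MA (MA.act (h * (s * s)) m)) (iA MA (s * h * s))
            = CS.mul (iA MA (s * h * s)) (iM MA (MA.act (h * (s * s)) m)))
    ∧ (s * h * s) * (s * h * s) = W.swIdS (h * (s * s)) * (s * h * s)
    ∧ (W.swIdS (h * (s * s)) = 1 → (s * h * s) * (s * h * s) = s * h * s) :=
  jones_projection_relations_general W MA CS h hh s hs
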